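/- arXiv:2305.05818 — 2 statements merged into one kernel-verified Lean document; each statement's English description precedes it below -/
import Mathlib

section
/- Let w be a double occurrence word and u a nonempty single occurrence word none of whose symbols occur in w. If the repeat word uu is not ascending-order equivalent to any vertex of G_w, then G_{wuu} ≅ G_w □ Δ¹. Similarly, if the return word uu^R is not ascending-order equivalent to any vertex of G_w, then G_{wuu^R} ≅ G_w □ Δ¹. -/
/-- The Cartesian product of two digraphs (given by their adjacency relations). -/
def boxAdj {V₁ V₂ : Type*} (A₁ : V₁ → V₁ → Prop) (A₂ : V₂ → V₂ → Prop) :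
    V₁ × V₂ → V₁ × V₂ → Prop :=
  fun p q => (p.1 = q.1 ∧ A₂ p.2 q.2) ∨ (p.2 = q.2 ∧ A₁ p.1 q.1)

/-- A source of a digraph: a vertex with no incoming edge. -/
def IsSourceVertex {V : Type*} (A : V → V → Prop) (s : V) : Prop := ∀ v, ¬ A v s

/-- A target of a digraph: a vertex with no outgoing edge. -/
def IsTargetVertex {V : Type*} (A : V → V → Prop) (t : V) : Prop := ∀ v, ¬ A t v

/-- Weak connectivity: any two vertices are joined by a path in the symmetrized digraph. -/
def WeaklyConnected {V : Type*} (A : V → V → Prop) : Prop :=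
  ∀ a b : V, Relation.ReflTransGen (fun x y => A x y ∨ A y x) a b

/-- A digraph has no directed cycles. -/
def NoDirectedCycles {V : Type*} (A : V → V → Prop) : Prop :=
  ∀ v : V, ¬ Relation.TransGen A v v

/-- A digraph is weakly directed if it is weakly connected with a unique source
and a unique target. -/
def WeaklyDirected {V : Type*} (A : V → V → Prop) : Prop :=
  WeaklyConnected A ∧ (∃! s, IsSourceVertex A s) ∧ (∃! t, IsTargetVertex A t)

/-- A digraph is consistently directed if it is weakly directed and has no directed cycles. -/
def ConsistentlyDirected {V : Type*} (A : V → V → Prop) : Prop :=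
  WeaklyDirected A ∧ NoDirectedCycles A

/-- Two digraphs are isomorphic: there is a bijection of vertex sets preserving
adjacency in both directions. -/
def DigraphIso {V₁ V₂ : Type*} (A₁ : V₁ → V₁ → Prop) (A₂ : V₂ → V₂ → Prop) : Prop :=
  ∃ e : V₁ ≃ V₂, ∀ a b : V₁, A₂ (e a) (e b) ↔ A₁ a b

/-- The `n`-dimensional simplicial digraph `Δⁿ` on vertices `v₀, …, vₙ`,
with an edge from `v_i` to `v_j` iff `i < j`. -/
def simplexAdj (n : ℕ) : Fin (n + 1) → Fin (n + 1) → Prop := fun i j => i < j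

/-- A double occurrence word: every symbol occurs zero or exactly two times. -/
def IsDOW (w : List ℕ) : Prop := ∀ x : ℕ, w.count x = 0 ∨ w.count x = 2

/-- `u` is a repeat factor of `w`: `u` is a nonempty single occurrence word and
`w = x u y u z`. -/
def IsRepeatFactor (u w : List ℕ) : Prop :=
  u ≠ [] ∧ u.Nodup ∧ ∃ x y z : List ℕ, w = x ++ u ++ y ++ u ++ z

/-- `u` is a return factor of `w`: `u` is a nonempty single occurrence word and
`w = x u y u^R z`. -/
def IsReturnFactor (u w : List ℕ) : Prop :=
  u ≠ [] ∧ u.Nodup ∧ ∃ x y z : List ℕ, w = x ++ u ++ y ++ u.reverse ++ z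

/-- `u` is a repeat or return factor of `w`. -/
def IsRRFactor (u w : List ℕ) : Prop := IsRepeatFactor u w ∨ IsReturnFactor u w

/-- `u` is a maximal repeat or return factor of `w`: no repeat or return factor of `w`
containing `u` as a contiguous factor is strictly longer. `M^SOW_w = {u | IsMaximalRR u w}`. -/
def IsMaximalRR (u w : List ℕ) : Prop :=
  IsRRFactor u w ∧ ∀ v : List ℕ, IsRRFactor v w → u <:+: v → v.length ≤ u.length

/-- Ascending-order equivalence: `w ~ w'` iff `w' = map f w` for a bijection `f`
of the alphabet. -/
def AOEquiv (w w' : List ℕ) : Prop := ∃ f : ℕ ≃ ℕ, w' = w.map f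

instance aoSetoid : Setoid (List ℕ) where
  r := AOEquiv
  iseqv := by
    refine ⟨fun w => ⟨Equiv.refl ℕ, by simp⟩, ?_, ?_⟩
    · rintro w w' ⟨f, rfl⟩
      exact ⟨f.symm, by simp [List.map_map]⟩
    · rintro a b c ⟨f, rfl⟩ ⟨g, rfl⟩
      exact ⟨f.trans g, by simp [List.map_map]⟩

/-- Ascending-order equivalence classes of words. -/
abbrev WordClass : Type := Quotient aoSetoid

/-- `v` is an immediate successor of `w` (i.e. `v ∈ D(w)`): `v` is ascending-order
equivalent to `d_u(w)` for some maximal repeat or return factor `u` of `w`. -/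
def ImmSucc (w v : List ℕ) : Prop :=
  ∃ u x y z : List ℕ, IsMaximalRR u w ∧
    (w = x ++ u ++ y ++ u ++ z ∨ w = x ++ u ++ y ++ u.reverse ++ z) ∧
    AOEquiv (x ++ y ++ z) v

/-- `v` is a successor of `w` (allowing `v = w`). -/
def Successor (w v : List ℕ) : Prop := Relation.ReflTransGen ImmSucc w v

/-- The vertices of the word graph `G_w`: ascending-order equivalence classes of `w`
and all of its successors. -/
def WGVertex (w : List ℕ) : Type :=
  { c : WordClass // ∃ v : List ℕ, Successor w v ∧ Quotient.mk aoSetoid v = c }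

/-- Adjacency between word classes: an edge from the class of `a` to the class of `b`
iff `b ∈ D(a)`. -/
def ClassAdj (c c' : WordClass) : Prop :=
  ∃ a b : List ℕ, Quotient.mk aoSetoid a = c ∧ Quotient.mk aoSetoid b = c' ∧ ImmSucc a b

/-- The adjacency relation of the word graph `G_w`. -/
def WGAdj (w : List ℕ) (c c' : WGVertex w) : Prop := ClassAdj c.1 c'.1

/-- `w` is coprime to `w'`: all concatenations `uv` of a vertex of `G_w` with a vertex of
`G_{w'}` are pairwise inequivalent. -/
def CoprimeDOW (w w' : List ℕ) : Prop :=
  ∀ u u' v v' : List ℕ, Successor w u → Successor w u' → Successor w' v → Successor w' v' →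
    AOEquiv (u ++ v) (u' ++ v') → (AOEquiv u u' ∧ AOEquiv v v')

namespace Prism
open List Relation

lemma aoe_refl (a : List ℕ) : AOEquiv a a := ⟨Equiv.refl ℕ, by simp⟩

lemma aoe_symm {a b : List ℕ} (h : AOEquiv a b) : AOEquiv b a := aoSetoid.iseqv.symm h

lemma aoe_trans {a b c : List ℕ} (h : AOEquiv a b) (h' : AOEquiv b c) : AOEquiv a c :=
  aoSetoid.iseqv.trans h h'

lemma aoe_length {a b : List ℕ} (h : AOEquiv a b) : a.length = b.length := by
  obtain ⟨f, rfl⟩ := h; simp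

def Del (V t : List ℕ) : Prop :=
  ∃ m x y z : List ℕ, IsMaximalRR m V ∧
    (V = x ++ m ++ y ++ m ++ z ∨ V = x ++ m ++ y ++ m.reverse ++ z) ∧ t = x ++ y ++ z

def SuccD (w t : List ℕ) : Prop := Relation.ReflTransGen Del w t

lemma immSucc_iff {a b : List ℕ} : ImmSucc a b ↔ ∃ t, Del a t ∧ AOEquiv t b := by
  constructor
  · rintro ⟨m, x, y, z, hm, hd, he⟩
    exact ⟨x ++ y ++ z, ⟨m, x, y, z, hm, hd, rfl⟩, he⟩
  · rintro ⟨t, ⟨m, x, y, z, hm, hd, rfl⟩, he⟩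
    exact ⟨m, x, y, z, hm, hd, he⟩

lemma rr_map (f : ℕ ≃ ℕ) {v V : List ℕ} (h : IsRRFactor v V) :
    IsRRFactor (v.map f) (V.map f) := by
  rcases h with ⟨hne, hnd, x, y, z, rfl⟩ | ⟨hne, hnd, x, y, z, rfl⟩
  · exact Or.inl ⟨by simpa using hne, hnd.map f.injective, x.map f, y.map f, z.map f, by simp⟩
  · exact Or.inr ⟨by simpa using hne, hnd.map f.injective, x.map f, y.map f, z.map f, by simp⟩

lemma maxrr_map (f : ℕ ≃ ℕ) {m V : List ℕ} (h : IsMaximalRR m V) :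
    IsMaximalRR (m.map f) (V.map f) := by
  obtain ⟨h1, h2⟩ := h
  refine ⟨rr_map f h1, fun v hv hinf => ?_⟩
  have hv' : IsRRFactor (v.map f.symm) V := by
    have := rr_map f.symm hv
    simpa [List.map_map] using this
  have hinf' : m <:+: v.map f.symm := by
    have := hinf.map f.symm
    simpa [List.map_map] using this
  have := h2 _ hv' hinf'
  simpa using this

lemma del_map (f : ℕ ≃ ℕ) {V t : List ℕ} (h : Del V t) : Del (V.map f) (t.map f) := by
  obtain ⟨m, x, y, z, hm, hd, rfl⟩ := h
  refine ⟨m.map f, x.map f, y.map f, z.map f, maxrr_map f hm, ?_, by simp⟩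
  rcases hd with rfl | rfl
  · exact Or.inl (by simp)
  · exact Or.inr (by simp)

lemma immSucc_congr_left {a a' b : List ℕ} (h : AOEquiv a a') (hi : ImmSucc a b) :
    ImmSucc a' b := by
  obtain ⟨f, rfl⟩ := h
  rw [immSucc_iff] at hi ⊢
  obtain ⟨t, hd, he⟩ := hi
  exact ⟨t.map f, del_map f hd, aoe_trans (aoe_symm ⟨f, rfl⟩) he⟩

lemma classAdj_iff {a b : List ℕ} :
    ClassAdj (Quotient.mk aoSetoid a) (Quotient.mk aoSetoid b) ↔ ImmSucc a b := by
  constructor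
  · rintro ⟨a', b', ha, hb, h⟩
    have ha' : AOEquiv a' a := Quotient.exact ha
    have hb' : AOEquiv b' b := Quotient.exact hb
    refine immSucc_congr_left ha' ?_
    rw [immSucc_iff] at h ⊢
    obtain ⟨t, hd, he⟩ := h
    exact ⟨t, hd, aoe_trans he hb'⟩
  · exact fun h => ⟨a, b, rfl, rfl, h⟩

lemma rr_nodup {m V : List ℕ} (h : IsRRFactor m V) : m.Nodup := by
  rcases h with ⟨_, h, _⟩ | ⟨_, h, _⟩ <;> exact h

lemma rr_ne_nil {m V : List ℕ} (h : IsRRFactor m V) : m ≠ [] := by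
  rcases h with ⟨h, _⟩ | ⟨h, _⟩ <;> exact h

lemma del_length {V t : List ℕ} (h : Del V t) : t.length < V.length := by
  obtain ⟨m, x, y, z, hm, hd, rfl⟩ := h
  have hne : 0 < m.length := List.length_pos_iff.2 (rr_ne_nil hm.1)
  rcases hd with rfl | rfl <;>
    · simp only [List.length_append, List.length_reverse]
      omega

lemma del_subset {V t : List ℕ} (h : Del V t) : t ⊆ V := by
  obtain ⟨m, x, y, z, hm, hd, rfl⟩ := h
  rcases hd with rfl | rfl <;> intro c hc <;> simp only [List.mem_append] at hc ⊢ <;> tauto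

lemma succD_subset {w t : List ℕ} (h : SuccD w t) : t ⊆ w := by
  induction h with
  | refl => exact fun _ h => h
  | tail _ h ih => exact fun c hc => ih (del_subset h hc)

lemma del_isDOW {V t : List ℕ} (hV : IsDOW V) (h : Del V t) : IsDOW t := by
  obtain ⟨m, x, y, z, hm, hd, rfl⟩ := h
  have hnd : m.Nodup := rr_nodup hm.1
  intro c
  have hcV := hV c
  by_cases hc : c ∈ m
  · have h1 : List.count c m = 1 := List.count_eq_one_of_mem hnd hc
    have h1' : List.count c m.reverse = 1 := by rwa [List.count_reverse]
    left
    rcases hd with rfl | rfl <;> simp only [List.count_append, h1, h1'] at hcV ⊢ <;> omega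
  · have h0 : List.count c m = 0 := List.count_eq_zero.2 hc
    have h0' : List.count c m.reverse = 0 := by rwa [List.count_reverse]
    rcases hd with rfl | rfl <;> simp only [List.count_append, h0, h0'] at hcV ⊢ <;> omega

lemma succD_isDOW {w t : List ℕ} (hw : IsDOW w) (h : SuccD w t) : IsDOW t := by
  induction h with
  | refl => exact hw
  | tail _ h ih => exact del_isDOW ih h

lemma rr_length_le {v V : List ℕ} (h : IsRRFactor v V) : v.length ≤ V.length := by
  rcases h with ⟨_, _, x, y, z, rfl⟩ | ⟨_, _, x, y, z, rfl⟩ <;>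
    · simp only [List.length_append, List.length_reverse]
      omega

lemma exists_maxrr {V : List ℕ} (h : ∃ v, IsRRFactor v V) : ∃ m, IsMaximalRR m V := by
  classical
  obtain ⟨v0, hv0⟩ := h
  have hspec : ∃ v, IsRRFactor v V ∧
      v.length = Nat.findGreatest (fun k => ∃ v, IsRRFactor v V ∧ v.length = k) V.length :=
    Nat.findGreatest_spec (P := fun k => ∃ v, IsRRFactor v V ∧ v.length = k)
      (rr_length_le hv0) ⟨v0, hv0, rfl⟩
  obtain ⟨m, hm, hmlen⟩ := hspec
  refine ⟨m, hm, fun v hv _ => ?_⟩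
  have := Nat.le_findGreatest (P := fun k => ∃ v, IsRRFactor v V ∧ v.length = k)
    (rr_length_le hv) ⟨v, hv, rfl⟩
  omega

lemma exists_del {V : List ℕ} (hV : IsDOW V) (hne : V ≠ []) : ∃ t, Del V t := by
  obtain ⟨c, hc⟩ := List.exists_mem_of_ne_nil V hne
  have h2 : List.count c V = 2 := by
    rcases hV c with h | h
    · exact absurd hc (List.count_eq_zero.1 h)
    · exact h
  have hrr : ∃ v, IsRRFactor v V := by
    obtain ⟨s, t, rfl⟩ := List.append_of_mem hc
    have hst : c ∈ s ∨ c ∈ t := by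
      by_contra hcon
      push_neg at hcon
      rw [List.count_append, List.count_cons_self,
        List.count_eq_zero.2 hcon.1, List.count_eq_zero.2 hcon.2] at h2
      omega
    rcases hst with hs | ht
    · obtain ⟨s0, s1, rfl⟩ := List.append_of_mem hs
      refine ⟨[c], Or.inl ⟨by simp, List.nodup_singleton c, s0, s1, t, ?_⟩⟩
      simp
    · obtain ⟨t0, t1, rfl⟩ := List.append_of_mem ht
      refine ⟨[c], Or.inl ⟨by simp, List.nodup_singleton c, s, t0, t1, ?_⟩⟩
      simp
  obtain ⟨m, hm⟩ := exists_maxrr hrr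
  rcases hm.1 with ⟨_, _, x, y, z, hd⟩ | ⟨_, _, x, y, z, hd⟩
  · exact ⟨x ++ y ++ z, m, x, y, z, hm, Or.inl hd, rfl⟩
  · exact ⟨x ++ y ++ z, m, x, y, z, hm, Or.inr hd, rfl⟩

lemma succD_nil (V : List ℕ) (hV : IsDOW V) : SuccD V [] := by
  generalize hn : V.length = n
  induction n using Nat.strong_induction_on generalizing V with
  | _ n ih =>
    by_cases h : V = []
    · subst h; exact Relation.ReflTransGen.refl
    · obtain ⟨t, ht⟩ := exists_del hV h
      subst hn
      exact Relation.ReflTransGen.head ht (ih t.length (del_length ht) t (del_isDOW hV ht) rfl)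

end Prism
namespace Prism
open List Relation

lemma inside_infix {u r v v' x₁ y z : List ℕ} (hrnd : r.Nodup) (hv : v ≠ [])
    (hmv : ∀ c ∈ v, c ∈ v')
    (heq : u ++ r = x₁ ++ (v ++ (y ++ (v' ++ z)))) : v <:+: u := by
  obtain ⟨c, hcv⟩ := List.exists_mem_of_ne_nil v hv
  have hcv' := hmv c hcv
  rcases List.append_eq_append_iff.1 heq with ⟨e, hx₁, hr⟩ | ⟨e, hu, he⟩
  · exfalso
    have h1 : 0 < List.count c v := List.count_pos_iff.2 hcv
    have h2 : 0 < List.count c v' := List.count_pos_iff.2 hcv'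
    have hle := List.nodup_iff_count_le_one.1 hrnd c
    rw [hr] at hle
    simp only [List.count_append] at hle
    omega
  · rcases List.append_eq_append_iff.1 he with ⟨e₂, he', _⟩ | ⟨e₂, hv₂, hr⟩
    · rw [he'] at hu
      exact ⟨x₁, e₂, by rw [hu, List.append_assoc]⟩
    · by_cases h0 : e₂ = []
      · subst h0
        rw [List.append_nil] at hv₂
        exact ⟨x₁, [], by rw [List.append_nil, hu, hv₂]⟩
      · exfalso
        obtain ⟨b, hb⟩ := List.exists_mem_of_ne_nil e₂ h0
        have hbv : b ∈ v := by rw [hv₂]; exact List.mem_append.2 (Or.inr hb)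
        have hbv' := hmv b hbv
        have h1 : 0 < List.count b e₂ := List.count_pos_iff.2 hb
        have h2 : 0 < List.count b v' := List.count_pos_iff.2 hbv'
        have hle := List.nodup_iff_count_le_one.1 hrnd b
        rw [hr] at hle
        simp only [List.count_append] at hle
        omega

lemma factor_infix {u V S v v' x y z : List ℕ}
    (hS : ∀ a ∈ S, a ∈ u) (hf : ∀ a ∈ u, a ∉ V)
    (hins : ∀ x₁ y' z', S = x₁ ++ (v ++ (y' ++ (v' ++ z'))) → v <:+: u)
    (hmv : ∀ c ∈ v, c ∈ v')
    {a : ℕ} (hav : a ∈ v) (hau : a ∈ u)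
    (heq : V ++ S = x ++ (v ++ (y ++ (v' ++ z)))) : v <:+: u := by
  rcases List.append_eq_append_iff.1 heq with ⟨e, hx, hS'⟩ | ⟨e, hV, he⟩
  · exact hins e y z hS'
  · rcases List.append_eq_append_iff.1 he with ⟨e₂, he', _⟩ | ⟨e₂, hv₂, hS₂⟩
    · exfalso
      refine hf a hau ?_
      rw [hV, he']
      simp [hav]
    · by_cases h0 : e = []
      · subst h0
        simp only [List.nil_append] at hv₂
        exact hins [] y z (by rw [hv₂]; simpa using hS₂)
      · exfalso
        obtain ⟨c, hc⟩ := List.exists_mem_of_ne_nil e h0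
        have hcV : c ∈ V := by rw [hV]; exact List.mem_append.2 (Or.inr hc)
        have hcv : c ∈ v := by rw [hv₂]; exact List.mem_append.2 (Or.inl hc)
        have hcu : c ∈ u := hS c (by
          rw [hS₂]
          exact List.mem_append.2 (Or.inr (List.mem_append.2 (Or.inr
            (List.mem_append.2 (Or.inl (hmv c hcv)))))))
        exact hf c hcu hcV

lemma del_u_forces {u r u' V x y z : List ℕ}
    (hu : u ≠ []) (hnd : u.Nodup) (hf : ∀ a ∈ u, a ∉ V)
    (hrm : ∀ a ∈ r, a ∈ u) (hrc : ∀ c, List.count c r = List.count c u)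
    (hu'c : ∀ c, List.count c u' = List.count c u)
    (heq : V ++ (u ++ r) = x ++ (u ++ (y ++ (u' ++ z)))) :
    x ++ y ++ z = V := by
  have step1 : ∀ c ∈ u, c ∉ x ∧ c ∉ y ∧ c ∉ z := by
    intro c hc
    have hcnt := congrArg (List.count c) heq
    simp only [List.count_append] at hcnt
    have hV0 : List.count c V = 0 := List.count_eq_zero.2 (hf c hc)
    have hu1 : List.count c u = 1 := List.count_eq_one_of_mem hnd hc
    have hr1 : List.count c r = 1 := by rw [hrc c, hu1]
    have hu'1 : List.count c u' = 1 := by rw [hu'c c, hu1]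
    have hx0 : List.count c x = 0 ∧ List.count c y = 0 ∧ List.count c z = 0 := by omega
    exact ⟨List.count_eq_zero.1 hx0.1, List.count_eq_zero.1 hx0.2.1,
      List.count_eq_zero.1 hx0.2.2⟩
  have finish : ∀ x', x' = V → (u ++ r = u ++ (y ++ (u' ++ z))) → x' ++ y ++ z = V := by
    intro x' hx' hur
    have hr' : r = y ++ (u' ++ z) := List.append_cancel_left hur
    have hy : y = [] := by
      by_contra h0
      obtain ⟨c, hc⟩ := List.exists_mem_of_ne_nil y h0
      have : c ∈ r := by rw [hr']; exact List.mem_append.2 (Or.inl hc)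
      exact (step1 c (hrm c this)).2.1 hc
    have hz : z = [] := by
      by_contra h0
      obtain ⟨c, hc⟩ := List.exists_mem_of_ne_nil z h0
      have : c ∈ r := by
        rw [hr']; exact List.mem_append.2 (Or.inr (List.mem_append.2 (Or.inr hc)))
      exact (step1 c (hrm c this)).2.2 hc
    subst hy; subst hz
    simpa using hx'
  rcases List.append_eq_append_iff.1 heq with ⟨e, hx, hur⟩ | ⟨e, hV, he⟩
  · have he0 : e = [] := by
      by_contra h0
      obtain ⟨c, hc⟩ := List.exists_mem_of_ne_nil e h0
      have hcu : c ∈ u := by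
        have : c ∈ u ++ r := by rw [hur]; exact List.mem_append.2 (Or.inl hc)
        rcases List.mem_append.1 this with h | h
        · exact h
        · exact hrm c h
      have hcx : c ∈ x := by rw [hx]; exact List.mem_append.2 (Or.inr hc)
      exact (step1 c hcu).1 hcx
    subst he0
    simp only [List.append_nil] at hx
    simp only [List.nil_append] at hur
    exact finish x hx hur
  · rcases List.append_eq_append_iff.1 he with ⟨e₂, he', _⟩ | ⟨e₂, hu₂, hur⟩
    · exfalso
      obtain ⟨c, hc⟩ := List.exists_mem_of_ne_nil u hu
      have hce : c ∈ e := by rw [he']; exact List.mem_append.2 (Or.inl hc)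
      have : c ∈ V := by rw [hV]; exact List.mem_append.2 (Or.inr hce)
      exact hf c hc this
    · have he0 : e = [] := by
        by_contra h0
        obtain ⟨c, hc⟩ := List.exists_mem_of_ne_nil e h0
        have hcu : c ∈ u := by rw [hu₂]; exact List.mem_append.2 (Or.inl hc)
        have : c ∈ V := by rw [hV]; exact List.mem_append.2 (Or.inr hc)
        exact hf c hcu this
      subst he0
      simp only [List.nil_append] at hu₂
      subst hu₂
      simp only [List.append_nil] at hV
      exact finish x hV.symm hur

lemma restrict_decomp {u V S m m' x y z : List ℕ}
    (hm'ne : m' ≠ []) (hmf : ∀ c ∈ m', c ∉ u)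
    (hS : ∀ a ∈ S, a ∈ u)
    (heq : V ++ S = x ++ (m ++ (y ++ (m' ++ z)))) :
    ∃ z₁, z = z₁ ++ S ∧ V = x ++ m ++ y ++ m' ++ z₁ := by
  have hzs : z <:+ V ++ S := by
    rw [heq]; exact ⟨x ++ m ++ y ++ m', by simp [List.append_assoc]⟩
  have hSs : S <:+ V ++ S := List.suffix_append V S
  rcases List.suffix_or_suffix_of_suffix hSs hzs with h | h
  · obtain ⟨z₁, rfl⟩ := h
    refine ⟨z₁, rfl, ?_⟩
    have h' : (x ++ m ++ y ++ m' ++ z₁) ++ S = V ++ S := by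
      simp only [List.append_assoc]
      exact heq.symm
    exact (List.append_cancel_right h').symm
  · obtain ⟨S₁, hS₁⟩ := h
    have key : V ++ S₁ = x ++ m ++ y ++ m' := by
      have h' : (V ++ S₁) ++ z = (x ++ m ++ y ++ m') ++ z := by
        simp only [List.append_assoc]
        rw [hS₁]
        exact heq
      exact List.append_cancel_right h'
    have hS₁0 : S₁ = [] := by
      by_contra h0
      obtain ⟨c, hc⟩ := List.exists_mem_of_ne_nil S₁ h0
      have hm's : m' <:+ V ++ S₁ := by rw [key]; exact ⟨x ++ m ++ y, rfl⟩
      have hS₁s : S₁ <:+ V ++ S₁ := List.suffix_append V S₁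
      rcases List.suffix_or_suffix_of_suffix hm's hS₁s with h1 | h1
      · obtain ⟨c', hc'⟩ := List.exists_mem_of_ne_nil m' hm'ne
        have : c' ∈ S := by rw [← hS₁]; exact List.mem_append.2 (Or.inl (h1.subset hc'))
        exact hmf c' hc' (hS c' this)
      · have hcm : c ∈ m' := h1.subset hc
        have hcu : c ∈ u := hS c (by rw [← hS₁]; exact List.mem_append.2 (Or.inl hc))
        exact hmf c hcm hcu
    subst hS₁0
    simp only [List.nil_append] at hS₁
    refine ⟨[], by rw [hS₁, List.nil_append], ?_⟩
    simpa using key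

end Prism
namespace Prism
open List Relation

lemma r_mem {u r : List ℕ} (hru : r = u ∨ r = u.reverse) : ∀ a ∈ r, a ∈ u := by
  rcases hru with rfl | rfl <;> intro a ha <;> simpa using ha

lemma r_count {u r : List ℕ} (hru : r = u ∨ r = u.reverse) :
    ∀ c, List.count c r = List.count c u := by
  rcases hru with rfl | rfl <;> intro c <;> simp [List.count_reverse]

lemma r_nodup {u r : List ℕ} (hru : r = u ∨ r = u.reverse) (hnd : u.Nodup) : r.Nodup := by
  rcases hru with rfl | rfl <;> simpa using hnd

lemma ur_mem {u r : List ℕ} (hru : r = u ∨ r = u.reverse) :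
    ∀ a ∈ u ++ r, a ∈ u := by
  intro a ha
  rcases List.mem_append.1 ha with h | h
  · exact h
  · exact r_mem hru a h

lemma u_rr {u r : List ℕ} (hru : r = u ∨ r = u.reverse) (hu : u ≠ []) (hnd : u.Nodup)
    (V : List ℕ) : IsRRFactor u (V ++ (u ++ r)) := by
  rcases hru with rfl | rfl
  · exact Or.inl ⟨hu, hnd, V, [], [], by simp⟩
  · exact Or.inr ⟨hu, hnd, V, [], [], by simp⟩

lemma rr_subset {m V : List ℕ} (h : IsRRFactor m V) : ∀ c ∈ m, c ∈ V := by
  rcases h with ⟨_, _, x, y, z, rfl⟩ | ⟨_, _, x, y, z, rfl⟩ <;> intro c hc <;>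
    simp only [List.mem_append] <;> tauto

lemma rr_extend {v V E : List ℕ} (h : IsRRFactor v V) : IsRRFactor v (V ++ E) := by
  rcases h with ⟨hne, hnd, x, y, z, rfl⟩ | ⟨hne, hnd, x, y, z, rfl⟩
  · exact Or.inl ⟨hne, hnd, x, y, z ++ E, by simp [List.append_assoc]⟩
  · exact Or.inr ⟨hne, hnd, x, y, z ++ E, by simp [List.append_assoc]⟩

lemma rr_with_u_infix {u r V v : List ℕ} (hru : r = u ∨ r = u.reverse)
    (hnd : u.Nodup) (hf : ∀ a ∈ u, a ∉ V)
    (hrr : IsRRFactor v (V ++ (u ++ r))) {a : ℕ} (hav : a ∈ v) (hau : a ∈ u) :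
    v <:+: u := by
  have hrnd : r.Nodup := r_nodup hru hnd
  have hv : v ≠ [] := rr_ne_nil hrr
  rcases hrr with ⟨_, _, x, y, z, hd⟩ | ⟨_, _, x, y, z, hd⟩
  · simp only [List.append_assoc] at hd
    exact factor_infix (ur_mem hru) hf
      (fun x₁ y' z' h => inside_infix hrnd hv (fun c hc => hc) h)
      (fun c hc => hc) hav hau hd
  · simp only [List.append_assoc] at hd
    exact factor_infix (ur_mem hru) hf
      (fun x₁ y' z' h => inside_infix hrnd hv (fun c hc => List.mem_reverse.2 hc) h)
      (fun c hc => List.mem_reverse.2 hc) hav hau hd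

lemma u_maximal {u r V : List ℕ} (hru : r = u ∨ r = u.reverse) (hu : u ≠ [])
    (hnd : u.Nodup) (hf : ∀ a ∈ u, a ∉ V) : IsMaximalRR u (V ++ (u ++ r)) := by
  refine ⟨u_rr hru hu hnd V, fun v hv hinf => ?_⟩
  obtain ⟨a, ha⟩ := List.exists_mem_of_ne_nil u hu
  exact (rr_with_u_infix hru hnd hf hv (hinf.subset ha) ha).length_le

lemma del_self {u r V : List ℕ} (hru : r = u ∨ r = u.reverse) (hu : u ≠ [])
    (hnd : u.Nodup) (hf : ∀ a ∈ u, a ∉ V) : Del (V ++ (u ++ r)) V := by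
  refine ⟨u, V, [], [], u_maximal hru hu hnd hf, ?_, by simp⟩
  rcases hru with rfl | rfl
  · exact Or.inl (by simp)
  · exact Or.inr (by simp)

lemma maxrr_extend {u r V m : List ℕ} (hru : r = u ∨ r = u.reverse) (hu : u ≠ [])
    (hnd : u.Nodup) (hf : ∀ a ∈ u, a ∉ V) (hm : IsMaximalRR m V) :
    IsMaximalRR m (V ++ (u ++ r)) := by
  refine ⟨rr_extend hm.1, fun v hv hinf => ?_⟩
  by_cases hvu : ∃ a ∈ v, a ∈ u
  · obtain ⟨a, hav, hau⟩ := hvu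
    exfalso
    have hvi : v <:+: u := rr_with_u_infix hru hnd hf hv hav hau
    obtain ⟨c, hc⟩ := List.exists_mem_of_ne_nil m (rr_ne_nil hm.1)
    exact hf c (hvi.subset (hinf.subset hc)) (rr_subset hm.1 c hc)
  · push_neg at hvu
    have hv' : IsRRFactor v V := by
      rcases hv with ⟨hne, hnd', x, y, z, hd⟩ | ⟨hne, hnd', x, y, z, hd⟩
      · simp only [List.append_assoc] at hd
        obtain ⟨z₁, hz, hV⟩ := restrict_decomp hne hvu (ur_mem hru) hd
        exact Or.inl ⟨hne, hnd', x, y, z₁, hV⟩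
      · simp only [List.append_assoc] at hd
        obtain ⟨z₁, hz, hV⟩ := restrict_decomp (by simpa using hne)
          (fun c hc => hvu c (List.mem_reverse.1 hc)) (ur_mem hru) hd
        exact Or.inr ⟨hne, hnd', x, y, z₁, hV⟩
    exact hm.2 v hv' hinf

lemma DC {u r V : List ℕ} (hru : r = u ∨ r = u.reverse) (hu : u ≠ []) (hnd : u.Nodup)
    (hf : ∀ a ∈ u, a ∉ V) {s : List ℕ} :
    Del (V ++ (u ++ r)) s ↔ s = V ∨ ∃ t, Del V t ∧ s = t ++ (u ++ r) := by
  constructor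
  · rintro ⟨m, x, y, z, hm, hd, rfl⟩
    by_cases hmu : ∃ a ∈ m, a ∈ u
    · obtain ⟨a, ham, hau⟩ := hmu
      have hminf : m <:+: u := by
        rcases hd with hd | hd <;> simp only [List.append_assoc] at hd
        · exact factor_infix (ur_mem hru) hf
            (fun x₁ y' z' h => inside_infix (r_nodup hru hnd) (rr_ne_nil hm.1)
              (fun c hc => hc) h) (fun c hc => hc) ham hau hd
        · exact factor_infix (ur_mem hru) hf
            (fun x₁ y' z' h => inside_infix (r_nodup hru hnd) (rr_ne_nil hm.1)
              (fun c hc => List.mem_reverse.2 hc) h)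
            (fun c hc => List.mem_reverse.2 hc) ham hau hd
      have hlen : u.length ≤ m.length := hm.2 u (u_rr hru hu hnd V) hminf
      have hmu' : m = u := hminf.eq_of_length (le_antisymm hminf.length_le hlen)
      rw [hmu'] at hd
      left
      rcases hd with hd | hd <;> simp only [List.append_assoc] at hd
      · exact del_u_forces hu hnd hf (r_mem hru) (r_count hru) (fun c => rfl) hd
      · exact del_u_forces hu hnd hf (r_mem hru) (r_count hru)
          (fun c => List.count_reverse) hd
    · push_neg at hmu
      right
      rcases hd with hd | hd <;> simp only [List.append_assoc] at hd
      · obtain ⟨z₁, hz, hV⟩ := restrict_decomp (rr_ne_nil hm.1) hmu (ur_mem hru) hd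
        have hmm : IsMaximalRR m V := by
          refine ⟨Or.inl ⟨rr_ne_nil hm.1, rr_nodup hm.1, x, y, z₁, hV⟩,
            fun v hv hinf => hm.2 v (rr_extend hv) hinf⟩
        exact ⟨x ++ y ++ z₁, ⟨m, x, y, z₁, hmm, Or.inl hV, rfl⟩,
          by rw [hz]; simp [List.append_assoc]⟩
      · obtain ⟨z₁, hz, hV⟩ := restrict_decomp (by simpa using (rr_ne_nil hm.1))
          (fun c hc => hmu c (List.mem_reverse.1 hc)) (ur_mem hru) hd
        have hmm : IsMaximalRR m V := by
          refine ⟨Or.inr ⟨rr_ne_nil hm.1, rr_nodup hm.1, x, y, z₁, hV⟩,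
            fun v hv hinf => hm.2 v (rr_extend hv) hinf⟩
        exact ⟨x ++ y ++ z₁, ⟨m, x, y, z₁, hmm, Or.inr hV, rfl⟩,
          by rw [hz]; simp [List.append_assoc]⟩
  · rintro (rfl | ⟨t, ⟨m, x, y, z, hm, hd, rfl⟩, rfl⟩)
    · exact del_self hru hu hnd hf
    · refine ⟨m, x, y, z ++ (u ++ r), maxrr_extend hru hu hnd hf hm, ?_, by
        simp [List.append_assoc]⟩
      rcases hd with rfl | rfl
      · exact Or.inl (by simp [List.append_assoc])
      · exact Or.inr (by simp [List.append_assoc])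
  
end Prism
namespace Prism
open List Relation

def extFun (t₁ : List ℕ) (f : ℕ → ℕ) (a : ℕ) : ℕ :=
  if a ∈ t₁ then f a else a

lemma exists_perm_fixing {t₁ t₂ u : List ℕ} (f : ℕ ≃ ℕ) (h : t₂ = t₁.map f)
    (h₁ : ∀ a ∈ u, a ∉ t₁) (h₂ : ∀ a ∈ u, a ∉ t₂) :
    ∃ g : ℕ ≃ ℕ, t₂ = t₁.map g ∧ ∀ a ∈ u, g a = a := by
  classical
  set s : Set ℕ := {a | a ∈ t₁ ∨ a ∈ u} with hs
  set t : Set ℕ := {a | a ∈ t₂ ∨ a ∈ u} with ht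
  have hmm1 : ∀ a, a ∈ t₁ → f a ∈ t₂ := by
    intro a ha; rw [h]; exact List.mem_map_of_mem ha
  have hmm2 : ∀ a, a ∈ t₂ → f.symm a ∈ t₁ := by
    intro a ha; rw [h] at ha
    obtain ⟨b, hb, rfl⟩ := List.mem_map.1 ha
    simpa using hb
  have hto : ∀ x : ↥s, extFun t₁ f ↑x ∈ t := by
    rintro ⟨x, hx⟩
    unfold extFun
    by_cases hx1 : x ∈ t₁
    · rw [if_pos hx1]; exact Or.inl (hmm1 _ hx1)
    · rw [if_neg hx1]; exact Or.inr (hx.resolve_left hx1)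
  have hinv : ∀ y : ↥t, extFun t₂ f.symm ↑y ∈ s := by
    rintro ⟨y, hy⟩
    unfold extFun
    by_cases hy1 : y ∈ t₂
    · rw [if_pos hy1]; exact Or.inl (hmm2 _ hy1)
    · rw [if_neg hy1]; exact Or.inr (hy.resolve_left hy1)
  let e₀ : ↥s ≃ ↥t :=
    { toFun := fun x => ⟨extFun t₁ f ↑x, hto x⟩
      invFun := fun y => ⟨extFun t₂ f.symm ↑y, hinv y⟩
      left_inv := by
        rintro ⟨x, hx⟩
        apply Subtype.ext
        show extFun t₂ f.symm (extFun t₁ f x) = x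
        unfold extFun
        by_cases hx1 : x ∈ t₁
        · rw [if_pos hx1, if_pos (hmm1 _ hx1), Equiv.symm_apply_apply]
        · rw [if_neg hx1, if_neg (h₂ _ (hx.resolve_left hx1))]
      right_inv := by
        rintro ⟨y, hy⟩
        apply Subtype.ext
        show extFun t₁ f (extFun t₂ f.symm y) = y
        unfold extFun
        by_cases hy1 : y ∈ t₂
        · rw [if_pos hy1, if_pos (hmm2 _ hy1), Equiv.apply_symm_apply]
        · rw [if_neg hy1, if_neg (h₁ _ (hy.resolve_left hy1))] }
  have hsf : s.Finite :=
    Set.Finite.ofFinset (t₁.toFinset ∪ u.toFinset) (by intro a; simp [hs])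
  have htf : t.Finite :=
    Set.Finite.ofFinset (t₂.toFinset ∪ u.toFinset) (by intro a; simp [ht])
  haveI : Infinite ↥(sᶜ) := Set.infinite_coe_iff.2 hsf.infinite_compl
  haveI : Infinite ↥(tᶜ) := Set.infinite_coe_iff.2 htf.infinite_compl
  haveI := Nat.Subtype.denumerable (sᶜ)
  haveI := Nat.Subtype.denumerable (tᶜ)
  have ec : ↥(sᶜ) ≃ ↥(tᶜ) := (Denumerable.eqv _).trans (Denumerable.eqv _).symm
  obtain ⟨g, hg⟩ := (Equiv.Set.compl e₀).symm ec
  have hgval : ∀ (a : ℕ), a ∈ s → g a = extFun t₁ f a := by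
    intro a hmem
    exact hg ⟨a, hmem⟩
  refine ⟨g, ?_, ?_⟩
  · rw [h]
    refine List.map_congr_left ?_
    intro a ha
    rw [hgval a (Or.inl ha), extFun, if_pos ha]
  · intro a ha
    rw [hgval a (Or.inr ha), extFun, if_neg (h₁ a ha)]

lemma aoe_append_right {t₁ t₂ u S : List ℕ} (h : AOEquiv t₁ t₂)
    (h₁ : ∀ a ∈ u, a ∉ t₁) (h₂ : ∀ a ∈ u, a ∉ t₂) (hS : ∀ a ∈ S, a ∈ u) :
    AOEquiv (t₁ ++ S) (t₂ ++ S) := by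
  obtain ⟨f, hf⟩ := h
  obtain ⟨g, hg, hfix⟩ := exists_perm_fixing f hf h₁ h₂
  have hSg : List.map g S = S := by
    have := List.map_congr_left (f := (g : ℕ → ℕ)) (g := id) (fun a ha => hfix a (hS a ha))
    rw [this, List.map_id]
  exact ⟨g, by rw [List.map_append, ← hg, hSg]⟩

lemma aoe_append_left_cancel {t₁ t₂ S : List ℕ} (h : AOEquiv (t₁ ++ S) (t₂ ++ S))
    (hl : t₁.length = t₂.length) : AOEquiv t₁ t₂ := by
  obtain ⟨f, hf⟩ := h
  rw [List.map_append] at hf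
  exact ⟨f, (List.append_inj hf (by simpa using hl.symm)).1⟩

end Prism
namespace Prism
open List Relation

lemma succD_succ {w t : List ℕ} (h : SuccD w t) : Successor w t :=
  Relation.ReflTransGen.mono (fun a b hd => immSucc_iff.2 ⟨b, hd, aoe_refl b⟩) _ _ h

lemma succ_to_succD {w v : List ℕ} (h : Successor w v) :
    ∃ t, SuccD w t ∧ AOEquiv t v := by
  induction h with
  | refl => exact ⟨w, Relation.ReflTransGen.refl, aoe_refl w⟩
  | tail _ h ih =>
    obtain ⟨t, ht, hte⟩ := ih
    obtain ⟨d, hd, hde⟩ := immSucc_iff.1 (immSucc_congr_left (aoe_symm hte) h)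
    exact ⟨d, ht.tail hd, hde⟩

lemma isDOW_map (f : ℕ ≃ ℕ) {V : List ℕ} (h : IsDOW V) : IsDOW (V.map f) := by
  intro x
  have hx : x = f (f.symm x) := (f.apply_symm_apply x).symm
  rw [hx, List.count_map_of_injective _ _ f.injective]
  exact h _

lemma reduce_to_S {u' r' : List ℕ} (hru' : r' = u' ∨ r' = u'.reverse) (hu' : u' ≠ [])
    (hnd' : u'.Nodup) (V : List ℕ) (hV : IsDOW V) (hf : ∀ a ∈ u', a ∉ V) :
    Relation.ReflTransGen Del (V ++ (u' ++ r')) (u' ++ r') := by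
  generalize hn : V.length = n
  induction n using Nat.strong_induction_on generalizing V with
  | _ n ih =>
    by_cases h0 : V = []
    · subst h0
      simp only [List.nil_append]
      exact Relation.ReflTransGen.refl
    · obtain ⟨d, hd⟩ := exists_del hV h0
      have step : Del (V ++ (u' ++ r')) (d ++ (u' ++ r')) :=
        (DC hru' hu' hnd' hf).2 (Or.inr ⟨d, hd, rfl⟩)
      subst hn
      exact Relation.ReflTransGen.head step
        (ih d.length (del_length hd) d (del_isDOW hV hd)
          (fun a ha had => hf a ha (del_subset hd had)) rfl)

lemma no_cross {w u r : List ℕ} (hru : r = u ∨ r = u.reverse) (hw : IsDOW w)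
    (hu : u ≠ []) (hnd : u.Nodup) (hfresh : ∀ a ∈ u, a ∉ w)
    (hyp : ∀ v, Successor w v → ¬ AOEquiv (u ++ r) v)
    {t₁ t₂ : List ℕ} (h₁ : SuccD w t₁) (h₂ : SuccD w t₂)
    (he : AOEquiv (t₁ ++ (u ++ r)) t₂) : False := by
  obtain ⟨f, hf⟩ := he
  have hf' : t₂ = (t₁.map f) ++ ((u.map f) ++ (r.map f)) := by
    rw [hf]; simp [List.map_append]
  have hru' : r.map f = u.map f ∨ r.map f = (u.map f).reverse := by
    rcases hru with rfl | rfl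
    · exact Or.inl rfl
    · exact Or.inr (by rw [List.map_reverse])
  have hu' : u.map f ≠ [] := by simpa using hu
  have hnd' : (u.map f).Nodup := hnd.map f.injective
  have hfr' : ∀ a ∈ u.map f, a ∉ t₁.map f := by
    rintro a ha hat
    obtain ⟨b, hb, rfl⟩ := List.mem_map.1 ha
    obtain ⟨c, hc, hfc⟩ := List.mem_map.1 hat
    have hcb : c = b := f.injective hfc
    subst hcb
    exact hfresh _ hb (succD_subset h₁ hc)
  have hDOW : IsDOW (t₁.map f) := isDOW_map f (succD_isDOW hw h₁)
  have hred := reduce_to_S hru' hu' hnd' (t₁.map f) hDOW hfr'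
  have hsucc : Successor w ((u.map f) ++ (r.map f)) := by
    refine (succD_succ h₂).trans (succD_succ ?_)
    rw [hf']
    exact hred
  exact hyp _ hsucc ⟨f, by rw [List.map_append]⟩

lemma succ_class {w u r s : List ℕ} (hru : r = u ∨ r = u.reverse) (hu : u ≠ [])
    (hnd : u.Nodup) (hfresh : ∀ a ∈ u, a ∉ w)
    (h : Successor (w ++ (u ++ r)) s) :
    ∃ t, SuccD w t ∧ (AOEquiv (t ++ (u ++ r)) s ∨ AOEquiv t s) := by
  induction h with
  | refl => exact ⟨w, Relation.ReflTransGen.refl, Or.inl (aoe_refl _)⟩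
  | tail _ h ih =>
    obtain ⟨t, ht, hcase⟩ := ih
    have hft : ∀ a ∈ u, a ∉ t := fun a ha hat => hfresh a ha (succD_subset ht hat)
    rcases hcase with he | he
    · obtain ⟨d, hd, hde⟩ := immSucc_iff.1 (immSucc_congr_left (aoe_symm he) h)
      rcases (DC hru hu hnd hft).1 hd with rfl | ⟨t', ht', rfl⟩
      · exact ⟨d, ht, Or.inr hde⟩
      · exact ⟨t', ht.tail ht', Or.inl hde⟩
    · obtain ⟨d, hd, hde⟩ := immSucc_iff.1 (immSucc_congr_left (aoe_symm he) h)
      exact ⟨d, ht.tail hd, Or.inr hde⟩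

lemma master {w u r : List ℕ} (hru : r = u ∨ r = u.reverse) (hw : IsDOW w) (hu : u ≠ [])
    (hnd : u.Nodup) (hfresh : ∀ a ∈ u, a ∉ w)
    (hyp : ∀ v, Successor w v → ¬ AOEquiv (u ++ r) v) :
    DigraphIso (WGAdj (w ++ (u ++ r))) (boxAdj (WGAdj w) (simplexAdj 1)) := by
  classical
  have hSu : ∀ a ∈ u ++ r, a ∈ u := ur_mem hru
  have hrep : ∀ c : WGVertex w, ∃ t, SuccD w t ∧ Quotient.mk aoSetoid t = c.1 := by
    rintro ⟨c, v, hv, rfl⟩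
    obtain ⟨t, ht, hte⟩ := succ_to_succD hv
    exact ⟨t, ht, Quotient.sound hte⟩
  choose T hT hTq using hrep
  have hfd : ∀ t, SuccD w t → ∀ a ∈ u, a ∉ t :=
    fun t ht a ha hat => hfresh a ha (succD_subset ht hat)
  have hfT : ∀ c, ∀ a ∈ u, a ∉ T c := fun c => hfd _ (hT c)
  have hLw : Del (w ++ (u ++ r)) w := del_self hru hu hnd hfresh
  have hsucc0 : ∀ t, SuccD w t → Successor (w ++ (u ++ r)) (t ++ (u ++ r)) := by
    intro t ht
    induction ht with
    | refl => exact Relation.ReflTransGen.refl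
    | tail hab h ih =>
      refine ih.tail (immSucc_iff.2 ⟨_ ++ (u ++ r), (DC hru hu hnd (hfd _ hab)).2
        (Or.inr ⟨_, h, rfl⟩), aoe_refl _⟩)
  have hsucc1 : ∀ t, SuccD w t → Successor (w ++ (u ++ r)) t := fun t ht =>
    Relation.ReflTransGen.head (immSucc_iff.2 ⟨w, hLw, aoe_refl w⟩) (succD_succ ht)
  let A : WGVertex w → WGVertex (w ++ (u ++ r)) := fun c =>
    ⟨Quotient.mk aoSetoid (T c ++ (u ++ r)), ⟨T c ++ (u ++ r), hsucc0 _ (hT c), rfl⟩⟩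
  let B : WGVertex w → WGVertex (w ++ (u ++ r)) := fun c =>
    ⟨c.1, ⟨T c, hsucc1 _ (hT c), hTq c⟩⟩
  let Ψ : WGVertex w × Fin 2 → WGVertex (w ++ (u ++ r)) := fun p =>
    if p.2 = 0 then A p.1 else B p.1
  have hΨ0 : ∀ c, Ψ (c, 0) = A c := fun c => if_pos rfl
  have hΨ1 : ∀ c, Ψ (c, 1) = B c := fun c => if_neg (show ¬((1 : Fin 2) = 0) by decide)
  have haoeTT : ∀ c c' : WGVertex w, AOEquiv (T c) (T c') ↔ c = c' := by
    intro c c'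
    constructor
    · intro h
      apply Subtype.ext
      rw [← hTq c, ← hTq c']
      exact Quotient.sound h
    · rintro rfl; exact aoe_refl _
  -- key adjacency computations
  have key00 : ∀ c c' : WGVertex w,
      ImmSucc (T c ++ (u ++ r)) (T c' ++ (u ++ r)) ↔ ImmSucc (T c) (T c') := by
    intro c c'
    constructor
    · intro h
      obtain ⟨d, hd, hde⟩ := immSucc_iff.1 h
      rcases (DC hru hu hnd (hfT c)).1 hd with rfl | ⟨t', ht', rfl⟩
      · exact absurd (aoe_symm hde) (fun hx => no_cross hru hw hu hnd hfresh hyp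
          (hT c') (hT c) hx)
      · have hlen : t'.length = (T c').length := by
          have := aoe_length hde
          simp only [List.length_append] at this
          omega
        exact immSucc_iff.2 ⟨t', ht', aoe_append_left_cancel hde hlen⟩
    · intro h
      obtain ⟨d, hd, hde⟩ := immSucc_iff.1 h
      refine immSucc_iff.2 ⟨d ++ (u ++ r), (DC hru hu hnd (hfT c)).2 (Or.inr ⟨d, hd, rfl⟩), ?_⟩
      exact aoe_append_right hde (hfd _ ((hT c).tail hd)) (hfT c') hSu
  have key01 : ∀ c c' : WGVertex w, ImmSucc (T c ++ (u ++ r)) (T c') ↔ c = c' := by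
    intro c c'
    constructor
    · intro h
      obtain ⟨d, hd, hde⟩ := immSucc_iff.1 h
      rcases (DC hru hu hnd (hfT c)).1 hd with rfl | ⟨t', ht', rfl⟩
      · exact (haoeTT c c').1 hde
      · exact absurd hde (fun hx => no_cross hru hw hu hnd hfresh hyp
          ((hT c).tail ht') (hT c') hx)
    · rintro rfl
      exact immSucc_iff.2 ⟨T c, (DC hru hu hnd (hfT c)).2 (Or.inl rfl), aoe_refl _⟩
  have key10 : ∀ c c' : WGVertex w, ¬ ImmSucc (T c) (T c' ++ (u ++ r)) := by
    intro c c' h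
    obtain ⟨d, hd, hde⟩ := immSucc_iff.1 h
    exact no_cross hru hw hu hnd hfresh hyp (hT c') ((hT c).tail hd) (aoe_symm hde)
  have hWG : ∀ c c' : WGVertex w, WGAdj w c c' ↔ ImmSucc (T c) (T c') := by
    intro c c'
    show ClassAdj c.1 c'.1 ↔ _
    rw [← hTq c, ← hTq c']
    exact classAdj_iff
  have hAdjAA : ∀ c c' : WGVertex w,
      WGAdj (w ++ (u ++ r)) (A c) (A c') ↔ ImmSucc (T c ++ (u ++ r)) (T c' ++ (u ++ r)) := by
    intro c c'
    show ClassAdj (Quotient.mk aoSetoid (T c ++ (u ++ r))) (Quotient.mk aoSetoid (T c' ++ (u ++ r))) ↔ _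
    exact classAdj_iff
  have hAdjAB : ∀ c c' : WGVertex w,
      WGAdj (w ++ (u ++ r)) (A c) (B c') ↔ ImmSucc (T c ++ (u ++ r)) (T c') := by
    intro c c'
    show ClassAdj (Quotient.mk aoSetoid (T c ++ (u ++ r))) c'.1 ↔ _
    rw [← hTq c']
    exact classAdj_iff
  have hAdjBA : ∀ c c' : WGVertex w,
      WGAdj (w ++ (u ++ r)) (B c) (A c') ↔ ImmSucc (T c) (T c' ++ (u ++ r)) := by
    intro c c'
    show ClassAdj c.1 (Quotient.mk aoSetoid (T c' ++ (u ++ r))) ↔ _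
    rw [← hTq c]
    exact classAdj_iff
  have hAdjBB : ∀ c c' : WGVertex w,
      WGAdj (w ++ (u ++ r)) (B c) (B c') ↔ ImmSucc (T c) (T c') := by
    intro c c'
    show ClassAdj c.1 c'.1 ↔ _
    rw [← hTq c, ← hTq c']
    exact classAdj_iff
  -- bijectivity
  have hinj : Function.Injective Ψ := by
    have hfin : ∀ i : Fin 2, i = 0 ∨ i = 1 := by decide
    rintro ⟨c, i⟩ ⟨c', j⟩ hψ
    rcases hfin i with rfl | rfl <;> rcases hfin j with rfl | rfl
    · rw [hΨ0, hΨ0] at hψ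
      have hval : Quotient.mk aoSetoid (T c ++ (u ++ r)) = Quotient.mk aoSetoid (T c' ++ (u ++ r)) :=
        congrArg (fun x : WGVertex (w ++ (u ++ r)) => x.1) hψ
      have he : AOEquiv (T c ++ (u ++ r)) (T c' ++ (u ++ r)) := Quotient.exact hval
      have hlen : (T c).length = (T c').length := by
        have := aoe_length he
        simp only [List.length_append] at this
        omega
      have := (haoeTT c c').1 (aoe_append_left_cancel he hlen)
      simp [this]
    · rw [hΨ0, hΨ1] at hψ
      exfalso
      have hval : Quotient.mk aoSetoid (T c ++ (u ++ r)) = Quotient.mk aoSetoid (T c') := by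
        have := congrArg (fun x : WGVertex (w ++ (u ++ r)) => x.1) hψ
        simpa [A, B, ← hTq c'] using this
      exact no_cross hru hw hu hnd hfresh hyp (hT c) (hT c') (Quotient.exact hval)
    · rw [hΨ1, hΨ0] at hψ
      exfalso
      have hval : Quotient.mk aoSetoid (T c' ++ (u ++ r)) = Quotient.mk aoSetoid (T c) := by
        have := congrArg (fun x : WGVertex (w ++ (u ++ r)) => x.1) hψ
        simpa [A, B, ← hTq c] using this.symm
      exact no_cross hru hw hu hnd hfresh hyp (hT c') (hT c) (Quotient.exact hval)
    · rw [hΨ1, hΨ1] at hψ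
      have hval : c.1 = c'.1 := congrArg (fun x : WGVertex (w ++ (u ++ r)) => x.1) hψ
      simp [Subtype.ext hval]
  have hsurj : Function.Surjective Ψ := by
    rintro ⟨d, v, hv, rfl⟩
    obtain ⟨t, ht, hcase⟩ := succ_class hru hu hnd hfresh hv
    have hcV : ∃ vv, Successor w vv ∧
        Quotient.mk aoSetoid vv = Quotient.mk aoSetoid t := ⟨t, succD_succ ht, rfl⟩
    rcases hcase with he | he
    · refine ⟨(⟨Quotient.mk aoSetoid t, hcV⟩, 0), ?_⟩
      refine (hΨ0 _).trans ?_
      apply Subtype.ext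
      show Quotient.mk aoSetoid (T _ ++ (u ++ r)) = Quotient.mk aoSetoid v
      have h1 : AOEquiv (T ⟨Quotient.mk aoSetoid t, hcV⟩) t :=
        Quotient.exact (hTq ⟨Quotient.mk aoSetoid t, hcV⟩)
      have h2 := aoe_append_right h1 (hfT ⟨Quotient.mk aoSetoid t, hcV⟩)
        (hfd t ht) hSu
      exact Quotient.sound (aoe_trans h2 he)
    · refine ⟨(⟨Quotient.mk aoSetoid t, hcV⟩, 1), ?_⟩
      refine (hΨ1 _).trans ?_
      apply Subtype.ext
      show Quotient.mk aoSetoid t = Quotient.mk aoSetoid v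
      exact Quotient.sound he
  -- edge correspondence
  have hmain : ∀ p q : WGVertex w × Fin 2,
      boxAdj (WGAdj w) (simplexAdj 1) p q ↔ WGAdj (w ++ (u ++ r)) (Ψ p) (Ψ q) := by
    have hfin : ∀ i : Fin 2, i = 0 ∨ i = 1 := by decide
    rintro ⟨c, i⟩ ⟨c', j⟩
    rcases hfin i with rfl | rfl <;> rcases hfin j with rfl | rfl
    · rw [hΨ0, hΨ0, hAdjAA, key00, ← hWG]
      unfold boxAdj simplexAdj
      constructor
      · rintro (⟨_, h2⟩ | ⟨_, h1⟩)
        · exact absurd h2 (show ¬((0 : Fin 2) < 0) by decide)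
        · exact h1
      · exact fun h => Or.inr ⟨rfl, h⟩
    · rw [hΨ0, hΨ1, hAdjAB, key01]
      unfold boxAdj simplexAdj
      constructor
      · rintro (⟨h1, _⟩ | ⟨h1, _⟩)
        · exact h1
        · exact absurd h1 (show ¬((0 : Fin 2) = 1) by decide)
      · rintro rfl
        exact Or.inl ⟨rfl, show (0 : Fin 2) < 1 by decide⟩
    · rw [hΨ1, hΨ0, hAdjBA]
      unfold boxAdj simplexAdj
      constructor
      · rintro (⟨_, h2⟩ | ⟨h1, _⟩)
        · exact absurd h2 (show ¬((1 : Fin 2) < 0) by decide)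
        · exact absurd h1 (show ¬((1 : Fin 2) = 0) by decide)
      · intro h
        exact absurd h (key10 c c')
    · rw [hΨ1, hΨ1, hAdjBB, ← hWG]
      unfold boxAdj simplexAdj
      constructor
      · rintro (⟨_, h2⟩ | ⟨_, h1⟩)
        · exact absurd h2 (show ¬((1 : Fin 2) < 1) by decide)
        · exact h1
      · intro h
        exact Or.inr ⟨rfl, h⟩
  let E := Equiv.ofBijective Ψ ⟨hinj, hsurj⟩
  refine ⟨E.symm, fun a b => ?_⟩
  have h2 : Ψ (E.symm a) = a := E.apply_symm_apply a
  have h3 : Ψ (E.symm b) = b := E.apply_symm_apply b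
  have := hmain (E.symm a) (E.symm b)
  rw [h2, h3] at this
  exact this

end Prism
/-- if the repeat word `uu` (resp. return word `uu^R`) built from a fresh
nonempty SOW `u` is not equivalent to any vertex of `G_w`, then `G_{wuu} ≅ G_w □ Δ¹`
(resp. `G_{wuu^R} ≅ G_w □ Δ¹`). -/
theorem concat_repeat_return_prism (w u : List ℕ) (hw : IsDOW w) (hu : u ≠ [])
    (hund : u.Nodup) (hfresh : ∀ a : ℕ, a ∈ u → a ∉ w) :
    ((∀ v : List ℕ, Successor w v → ¬ AOEquiv (u ++ u) v) →
        DigraphIso (WGAdj (w ++ u ++ u)) (boxAdj (WGAdj w) (simplexAdj 1))) ∧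
      ((∀ v : List ℕ, Successor w v → ¬ AOEquiv (u ++ u.reverse) v) →
        DigraphIso (WGAdj (w ++ u ++ u.reverse)) (boxAdj (WGAdj w) (simplexAdj 1))) := by
  constructor
  · intro hyp
    have h := Prism.master (Or.inl rfl) hw hu hund hfresh hyp
    rwa [← List.append_assoc] at h
  · intro hyp
    have h := Prism.master (Or.inr rfl) hw hu hund hfresh hyp
    rwa [← List.append_assoc] at h
end

section
/- Let w and w' be nonempty double occurrence words with disjoint symbol sets. Then the set of maximal repeat or return factors of the concatenation ww' is the disjoint union of those of w and of w': M^SOW_{ww'} = M^SOW_w ∪ M^SOW_{w'}, where each factor of w occurs inside the w-part of ww' and each factor of w' inside the w'-part. -/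
lemma rr_subset {u w : List ℕ} (h : IsRRFactor u w) : ∀ a ∈ u, a ∈ w := by
  rcases h with ⟨_, _, x, y, z, rfl⟩ | ⟨_, _, x, y, z, rfl⟩ <;> intro a ha <;> simp [ha]

lemma rr_ne_nil {u w : List ℕ} (h : IsRRFactor u w) : u ≠ [] := by
  rcases h with ⟨h, _⟩ | ⟨h, _⟩ <;> exact h

lemma rr_infix {u w : List ℕ} (h : IsRRFactor u w) : u <:+: w := by
  rcases h with ⟨_, _, x, y, z, rfl⟩ | ⟨_, _, x, y, z, rfl⟩
  · exact ⟨x, y ++ u ++ z, by simp⟩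
  · exact ⟨x, y ++ u.reverse ++ z, by simp⟩

lemma split_concat {w w' x u y u2 z : List ℕ} (hu : u ≠ [])
    (hset : ∀ a, a ∈ u2 ↔ a ∈ u)
    (hdisj : ∀ a : ℕ, a ∈ w → a ∉ w')
    (h : w ++ w' = x ++ u ++ y ++ u2 ++ z) :
    (∃ z₀, w = x ++ u ++ y ++ u2 ++ z₀ ∧ z = z₀ ++ w') ∨
    (∃ x₀, w' = x₀ ++ u ++ y ++ u2 ++ z ∧ x = w ++ x₀) := by
  obtain ⟨a, ha⟩ := List.exists_mem_of_ne_nil u hu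
  have h1 : w ++ w' = x ++ (u ++ (y ++ (u2 ++ z))) := by
    simpa [List.append_assoc] using h
  rcases List.append_eq_append_iff.mp h1 with ⟨x₀, hx, hw'⟩ | ⟨c, hwc, hcd⟩
  · right; exact ⟨x₀, by simp [hw', List.append_assoc], hx⟩
  · rcases List.append_eq_append_iff.mp hcd with ⟨m2, hceq, h2⟩ | ⟨m1, hueq, hw'eq⟩
    · rcases List.append_eq_append_iff.mp h2 with ⟨m3, hm2, h3⟩ | ⟨y₀, hy, hw'3⟩
      · rcases List.append_eq_append_iff.mp h3 with ⟨m5, hm3, hz⟩ | ⟨m4, hu2eq, hw'4⟩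
        · left
          refine ⟨m5, ?_, hz⟩
          rw [hwc, hceq, hm2, hm3]; simp [List.append_assoc]
        · rcases eq_or_ne m4 [] with rfl | hm4
          · left
            refine ⟨[], ?_, by simp [hw'4]⟩
            simp only [List.append_nil] at hu2eq
            rw [hwc, hceq, hm2, hu2eq]; simp [List.append_assoc]
          · exfalso
            obtain ⟨b, hb⟩ := List.exists_mem_of_ne_nil m4 hm4
            have hbw' : b ∈ w' := by rw [hw'4]; simp [hb]
            have hbu : b ∈ u := (hset b).mp (by rw [hu2eq]; simp [hb])
            have hbw : b ∈ w := by rw [hwc, hceq]; simp [hbu]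
            exact hdisj b hbw hbw'
      · exfalso
        have haw' : a ∈ w' := by rw [hw'3]; simp [(hset a).mpr ha]
        have haw : a ∈ w := by rw [hwc, hceq]; simp [ha]
        exact hdisj a haw haw'
    · rcases eq_or_ne c [] with rfl | hc
      · right
        refine ⟨[], ?_, by simp [hwc]⟩
        simp only [List.nil_append] at hueq
        rw [hw'eq, ← hueq]; simp [List.append_assoc]
      · exfalso
        obtain ⟨b, hb⟩ := List.exists_mem_of_ne_nil c hc
        have hbw : b ∈ w := by rw [hwc]; simp [hb]
        have hbu : b ∈ u := by rw [hueq]; simp [hb]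
        have hbw' : b ∈ w' := by rw [hw'eq]; simp [(hset b).mpr hbu]
        exact hdisj b hbw hbw'

lemma rr_concat {w w' u : List ℕ} (hdisj : ∀ a : ℕ, a ∈ w → a ∉ w') :
    IsRRFactor u (w ++ w') ↔ IsRRFactor u w ∨ IsRRFactor u w' := by
  constructor
  · rintro (⟨hu, hnd, x, y, z, hdec⟩ | ⟨hu, hnd, x, y, z, hdec⟩)
    · rcases split_concat hu (fun a => Iff.rfl) hdisj hdec with ⟨z₀, h1, _⟩ | ⟨x₀, h1, _⟩
      · exact Or.inl (Or.inl ⟨hu, hnd, x, y, z₀, h1⟩)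
      · exact Or.inr (Or.inl ⟨hu, hnd, x₀, y, z, h1⟩)
    · rcases split_concat hu (fun a => List.mem_reverse) hdisj hdec with ⟨z₀, h1, _⟩ | ⟨x₀, h1, _⟩
      · exact Or.inl (Or.inr ⟨hu, hnd, x, y, z₀, h1⟩)
      · exact Or.inr (Or.inr ⟨hu, hnd, x₀, y, z, h1⟩)
  · rintro ((⟨hu, hnd, x, y, z, rfl⟩ | ⟨hu, hnd, x, y, z, rfl⟩) | (⟨hu, hnd, x, y, z, rfl⟩ | ⟨hu, hnd, x, y, z, rfl⟩))
    · exact Or.inl ⟨hu, hnd, x, y, z ++ w', by simp [List.append_assoc]⟩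
    · exact Or.inr ⟨hu, hnd, x, y, z ++ w', by simp [List.append_assoc]⟩
    · exact Or.inl ⟨hu, hnd, w ++ x, y, z, by simp [List.append_assoc]⟩
    · exact Or.inr ⟨hu, hnd, w ++ x, y, z, by simp [List.append_assoc]⟩

/-- for nonempty DOWs with disjoint symbol sets, the maximal repeat or
return factors of `ww'` are exactly those of `w` together with those of `w'`; the union
is disjoint, and each factor occurs inside the corresponding part. -/
theorem maximal_factors_concat (w w' : List ℕ) (hw : IsDOW w) (hw' : IsDOW w')
    (hne : w ≠ []) (hne' : w' ≠ []) (hdisj : ∀ x : ℕ, x ∈ w → x ∉ w') :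
    (∀ u : List ℕ, IsMaximalRR u (w ++ w') ↔ (IsMaximalRR u w ∨ IsMaximalRR u w')) ∧
      (∀ u : List ℕ, ¬ (IsMaximalRR u w ∧ IsMaximalRR u w')) ∧
      (∀ u : List ℕ, IsMaximalRR u w → u <:+: w) ∧
      (∀ u : List ℕ, IsMaximalRR u w' → u <:+: w') := by
  refine ⟨?_, ?_, ?_, ?_⟩
  · intro u
    constructor
    · rintro ⟨hrr, hmax⟩
      rcases (rr_concat hdisj).mp hrr with h | h
      · exact Or.inl ⟨h, fun v hv huv => hmax v ((rr_concat hdisj).mpr (Or.inl hv)) huv⟩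
      · exact Or.inr ⟨h, fun v hv huv => hmax v ((rr_concat hdisj).mpr (Or.inr hv)) huv⟩
    · rintro (⟨hrr, hmax⟩ | ⟨hrr, hmax⟩)
      · refine ⟨(rr_concat hdisj).mpr (Or.inl hrr), fun v hv huv => ?_⟩
        rcases (rr_concat hdisj).mp hv with h | h
        · exact hmax v h huv
        · exfalso
          obtain ⟨a, ha⟩ := List.exists_mem_of_ne_nil u (rr_ne_nil hrr)
          exact hdisj a (rr_subset hrr a ha) (rr_subset h a (huv.subset ha))
      · refine ⟨(rr_concat hdisj).mpr (Or.inr hrr), fun v hv huv => ?_⟩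
        rcases (rr_concat hdisj).mp hv with h | h
        · exfalso
          obtain ⟨a, ha⟩ := List.exists_mem_of_ne_nil u (rr_ne_nil hrr)
          exact hdisj a (rr_subset h a (huv.subset ha)) (rr_subset hrr a ha)
        · exact hmax v h huv
  · rintro u ⟨⟨h1, _⟩, ⟨h2, _⟩⟩
    obtain ⟨a, ha⟩ := List.exists_mem_of_ne_nil u (rr_ne_nil h1)
    exact hdisj a (rr_subset h1 a ha) (rr_subset h2 a ha)
  · exact fun u hu => rr_infix hu.1
  · exact fun u hu => rr_infix hu.1
end
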